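/- Let {x_i} be a partition of X into k = |{x_i}| blocks each of size at most d×d, with distinct blocks r_j occurring with multiplicities n_j (so Σ_j n_j = k). Define H(X) = −Σ_j (n_j/k) log₂(n_j/k) and BDM(X) = Σ_j (CTM(r_j) + log₂ n_j), where CTM values are bounded by a constant depending only on d. Then |BDM(X) − H(X)| ≤ c_d · log₂ k for some constant c_d depending only on d. -/

import Mathlib

/-!
Every block occurring in `X` has multiplicity `1 ≤ n ≤ k`, so both `log₂ n` and the entropy term
`-(n/k) log₂ (n/k) ≤ -log₂ (n/k) = log₂ k - log₂ n` lie in `[0, log₂ k]`. Since at most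
`|Block|` distinct blocks occur, the difference is bounded by
`∑ |CTM| + 2 |Block| log₂ k`, and `log₂ k ≥ 1` for `k ≥ 2` absorbs the constant.
-/

open Finset Real

section LogBounds

variable {b n k : ℝ}

lemma abs_logb_le_logb_of_one_le_of_le (hb : 1 < b) (hn : 1 ≤ n) (hnk : n ≤ k) :
    |logb b n| ≤ logb b k := by
  rw [abs_of_nonneg (logb_nonneg hb hn)]
  exact logb_le_logb_of_le hb (by linarith) hnk

lemma abs_div_mul_logb_div_le_logb (hb : 1 < b) (hn : 1 ≤ n) (hnk : n ≤ k) :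
    |n / k * logb b (n / k)| ≤ logb b k := by
  have hk : 0 < k := by linarith
  have hp0 : 0 ≤ n / k := by positivity
  have hp1 : n / k ≤ 1 := (div_le_one hk).mpr hnk
  have hlogp : logb b (n / k) ≤ 0 := logb_nonpos hb hp0 hp1
  rw [abs_mul, abs_of_nonneg hp0, abs_of_nonpos hlogp]
  calc n / k * -logb b (n / k) ≤ 1 * -logb b (n / k) :=
        mul_le_mul_of_nonneg_right hp1 (neg_nonneg.mpr hlogp)
    _ = logb b k - logb b n := by rw [one_mul, logb_div (by positivity) hk.ne', neg_sub]
    _ ≤ logb b k := by linarith [logb_nonneg hb hn]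

end LogBounds

lemma abs_sum_add_logb_sub_neg_sum_mul_logb_le {α : Type*} (s : Finset α) (C : α → ℝ)
    (n : α → ℕ) {k : ℝ} (hk : 2 ≤ k) (hn : ∀ r ∈ s, 1 ≤ n r ∧ (n r : ℝ) ≤ k) :
    |(∑ r ∈ s, (C r + logb 2 (n r))) - -(∑ r ∈ s, (n r / k) * logb 2 (n r / k))|
      ≤ (∑ r ∈ s, |C r| + 2 * #s) * logb 2 k := by
  have hlogk : 1 ≤ logb 2 k := by
    rw [← logb_self_eq_one one_lt_two]
    exact logb_le_logb_of_le one_lt_two two_pos hk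
  have hC : |∑ r ∈ s, C r| ≤ (∑ r ∈ s, |C r|) * logb 2 k :=
    (abs_sum_le_sum_abs _ _).trans
      (le_mul_of_one_le_right (sum_nonneg fun _ _ => abs_nonneg _) hlogk)
  have hlog : |∑ r ∈ s, logb 2 (n r)| ≤ #s * logb 2 k := by
    refine (abs_sum_le_sum_abs _ _).trans ?_
    rw [← nsmul_eq_mul]
    refine sum_le_card_nsmul _ _ _ fun r hr => ?_
    exact abs_logb_le_logb_of_one_le_of_le one_lt_two (by exact_mod_cast (hn r hr).1) (hn r hr).2
  have hent : |∑ r ∈ s, (n r / k) * logb 2 (n r / k)| ≤ #s * logb 2 k := by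
    refine (abs_sum_le_sum_abs _ _).trans ?_
    rw [← nsmul_eq_mul]
    refine sum_le_card_nsmul _ _ _ fun r hr => ?_
    exact abs_div_mul_logb_div_le_logb one_lt_two (by exact_mod_cast (hn r hr).1) (hn r hr).2
  rw [sub_neg_eq_add, sum_add_distrib]
  calc _ ≤ |∑ r ∈ s, C r| + |∑ r ∈ s, logb 2 (n r)|
          + |∑ r ∈ s, (n r / k) * logb 2 (n r / k)| := abs_add_three _ _ _
    _ ≤ _ := by linarith

/-- Worst-case convergence of BDM to Shannon entropy: blocks range over a finite set
(the binary matrices of size at most `d × d`), so CTM values are bounded and there is a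
constant `c_d` with `|BDM(X) − H(X)| ≤ c_d · log₂ k`, where `k` is the number of blocks in
the partition, `BDM(X) = Σ_j (CTM(r_j) + log₂ n_j)` and
`H(X) = −Σ_j (n_j/k) log₂(n_j/k)`. -/
theorem stmt10 {Block : Type} [Fintype Block] [DecidableEq Block] (CTM : Block → ℝ) :
    ∃ c : ℝ, 0 ≤ c ∧ ∀ X : List Block, 2 ≤ X.length →
      |(∑ r ∈ X.toFinset, (CTM r + Real.logb 2 (X.count r)))
        - (-(∑ r ∈ X.toFinset, ((X.count r : ℝ) / X.length)
              * Real.logb 2 ((X.count r : ℝ) / X.length)))|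
        ≤ c * Real.logb 2 (X.length) := by
  refine ⟨∑ r, |CTM r| + 2 * Fintype.card Block, by positivity, fun X hX => ?_⟩
  have hcount : ∀ r ∈ X.toFinset, 1 ≤ X.count r ∧ (X.count r : ℝ) ≤ X.length := fun r hr =>
    ⟨List.count_pos_iff.mpr (List.mem_toFinset.mp hr), by exact_mod_cast List.count_le_length⟩
  have hlogk : 0 ≤ logb 2 (X.length : ℝ) :=
    logb_nonneg one_lt_two (by exact_mod_cast (by omega : 1 ≤ X.length))
  refine (abs_sum_add_logb_sub_neg_sum_mul_logb_le _ CTM _ (by exact_mod_cast hX) hcount).trans ?_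
  gcongr
  · exact subset_univ _
  · exact card_le_univ _
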